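/- arXiv:2208.11869 — 3 statements merged into one kernel-verified Lean document; each statement's English description precedes it below -/
import Mathlib

section
/- Suppose σ ∈ X satisfies H(σ) − H(𝟐) ≤ Γ* and N₁(σ) ≤ ℓ*². Then the projection sending every spin 1 to spin 2 does not increase the energy: H(P^{12}σ) ≤ H(σ); moreover equality holds if and only if N₁(σ) = 0. -/
namespace GenPotts

/-- Spin values: `0` represents spin `1`, `1` represents spin `2`, `2` represents spin `3`. -/
abbrev Spin := Fin 3

/-- Vertices of the two-dimensional discrete torus. -/
abbrev Vtx (K L : ℕ) := ZMod K × ZMod L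

/-- Spin configurations. -/
abbrev Config (K L : ℕ) := Vtx K L → Spin

section Defs

variable (K L : ℕ)

/-- The constant configuration with all spins equal to `r`. -/
def const (r : Spin) : Config K L := fun _ => r

variable [NeZero K] [NeZero L]

/-- The number of (unordered nearest-neighbour) edges of the torus whose endpoint spins are
`i` and `j`.  Each edge is represented exactly once as a pair (vertex, direction), where the
direction `true` points right and `false` points up. -/
def nEdge (σ : Config K L) (i j : Spin) : ℕ :=
  ((Finset.univ : Finset (Vtx K L × Bool)).filter (fun p =>
    (σ p.1 = i ∧ σ (if p.2 then (p.1.1 + 1, p.1.2) else (p.1.1, p.1.2 + 1)) = j) ∨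
    (σ p.1 = j ∧ σ (if p.2 then (p.1.1 + 1, p.1.2) else (p.1.1, p.1.2 + 1)) = i))).card

/-- The number of vertices with spin `i`. -/
def nVtx (σ : Config K L) (i : Spin) : ℕ :=
  ((Finset.univ : Finset (Vtx K L)).filter (fun v => σ v = i)).card

end Defs

/-- The coupling constants of the generalized Potts model. -/
structure Couplings where
  J11 : ℝ
  J22 : ℝ
  J33 : ℝ
  J12 : ℝ
  J13 : ℝ
  J23 : ℝ

namespace Couplings

def γ1 (C : Couplings) : ℝ := C.J11 - C.J22
def γ12 (C : Couplings) : ℝ := C.J12 + C.J22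
def γ23 (C : Couplings) : ℝ := C.J23 + C.J22

end Couplings

/-- The Hamiltonian of the generalized three-state Potts model. -/
noncomputable def H (K L : ℕ) [NeZero K] [NeZero L] (C : Couplings) (σ : Config K L) : ℝ :=
  -(C.J11 * nEdge K L σ 0 0 + C.J22 * nEdge K L σ 1 1 + C.J33 * nEdge K L σ 2 2)
    + C.J12 * nEdge K L σ 0 1 + C.J13 * nEdge K L σ 0 2 + C.J23 * nEdge K L σ 1 2

/-- The auxiliary function `f_h`. -/
noncomputable def fh (h x : ℝ) : ℝ :=
  4 * (x + h / 2) * (⌈(x + h / 2) / h⌉ : ℝ)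
    - 2 * h * ((⌈(x + h / 2) / h⌉ : ℝ) ^ 2 - (⌈(x + h / 2) / h⌉ : ℝ) + 1)

/-- The critical length `ℓ*`. -/
noncomputable def lstar (C : Couplings) : ℕ := ⌈(2 * C.γ12 + C.γ1) / (2 * C.γ1)⌉₊

/-- The critical energy barrier `Γ*`. -/
noncomputable def Γstar (C : Couplings) : ℝ := fh C.γ1 C.γ12

/-- The standing assumptions on the lattice sizes and the coupling constants. -/
structure Admissible (K L : ℕ) (C : Couplings) : Prop where
  hKL : K ≤ L
  hK : 2 * lstar C ^ 2 ≤ K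
  pos11 : 0 < C.J11
  pos22 : 0 < C.J22
  pos33 : 0 < C.J33
  pos12 : 0 < C.J12
  pos13 : 0 < C.J13
  pos23 : 0 < C.J23
  h1122 : C.J22 < C.J11
  h2233 : C.J22 = C.J33
  h1213 : C.J12 = C.J13
  hA : ∀ n : ℤ, (2 * C.γ12 + C.γ1) / (2 * C.γ1) ≠ (n : ℝ)
  hB : fh C.γ1 C.γ12 = 2 * (K + 1) * C.γ23
  hC : 4 * C.γ23 + C.γ1 ≤ 2 * C.γ12

section Paths

variable (K L : ℕ) [NeZero K] [NeZero L]

/-- Two configurations differ at exactly one vertex. -/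
def SingleFlip (σ σ' : Config K L) : Prop :=
  ∃ v, σ v ≠ σ' v ∧ ∀ w, w ≠ v → σ w = σ' w

/-- A path: a finite sequence of configurations in which consecutive configurations differ
at exactly one vertex. -/
structure Path where
  len : ℕ
  toFun : ℕ → Config K L
  step : ∀ n, n < len → SingleFlip K L (toFun n) (toFun (n + 1))

/-- The height of a path: the maximum of `H` along it. -/
noncomputable def Path.height {K L : ℕ} [NeZero K] [NeZero L] (ω : Path K L)
    (C : Couplings) : ℝ :=
  Finset.sup' (Finset.range (ω.len + 1))
    (Finset.nonempty_range_iff.mpr (Nat.succ_ne_zero _))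
    (fun n => H K L C (ω.toFun n))

/-- The path goes from `σ` to `σ'`. -/
def Path.FromTo {K L : ℕ} [NeZero K] [NeZero L] (ω : Path K L)
    (σ σ' : Config K L) : Prop :=
  ω.toFun 0 = σ ∧ ω.toFun ω.len = σ'

/-- A path is an `ij`-path if every configuration along it has all spins in `{i, j}`. -/
def Path.OnlySpins {K L : ℕ} [NeZero K] [NeZero L] (ω : Path K L) (i j : Spin) : Prop :=
  ∀ n ≤ ω.len, ∀ v, ω.toFun n v = i ∨ ω.toFun n v = j

/-- The communication height `Φ(σ, σ')`: the minimal height over paths from `σ` to `σ'`. -/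
noncomputable def Phi (C : Couplings) (σ σ' : Config K L) : ℝ :=
  sInf {x | ∃ ω : Path K L, ω.FromTo σ σ' ∧ ω.height C = x}

/-- The communication height `Φ(σ, A)` between `σ` and a set `A`. -/
noncomputable def PhiSet (C : Couplings) (σ : Config K L) (A : Set (Config K L)) : ℝ :=
  sInf {x | ∃ ω : Path K L, ω.toFun 0 = σ ∧ ω.toFun ω.len ∈ A ∧ ω.height C = x}

/-- The energy barrier `Γ(σ, σ') = Φ(σ, σ') − H(σ)`. -/
noncomputable def Gamma (C : Couplings) (σ σ' : Config K L) : ℝ :=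
  Phi K L C σ σ' - H K L C σ

/-- The stability level `V_σ = Φ(σ, I_σ) − H(σ)` where `I_σ = {η : H(η) < H(σ)}`. -/
noncomputable def stabLevel (C : Couplings) (σ : Config K L) : ℝ :=
  PhiSet K L C σ {η | H K L C η < H K L C σ} - H K L C σ

/-- The set `X^s` of global minimizers of `H`. -/
def Xs (C : Couplings) : Set (Config K L) :=
  {σ | ∀ η, H K L C σ ≤ H K L C η}

/-- The set `X^m` of metastable configurations. -/
noncomputable def Xm (C : Couplings) : Set (Config K L) :=
  {η | η ∉ Xs K L C ∧
    stabLevel K L C η = sSup {x | ∃ σ, σ ∉ Xs K L C ∧ stabLevel K L C σ = x}}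

/-- The projection operator `P^{rs}` replacing every spin `r` by `s`. -/
def proj (r s : Spin) (σ : Config K L) : Config K L :=
  fun v => if σ v = r then s else σ v

/-- The initial cycle `C_r = {σ : Φ(𝐫, σ) < H(𝟐) + Γ*}`. -/
noncomputable def initCycle (C : Couplings) (r : Spin) : Set (Config K L) :=
  {σ | Phi K L C (const K L r) σ < H K L C (const K L 1) + Γstar C}

/-- An optimal path from `σ` to `σ'`: a path whose height equals `Φ(σ, σ')`. -/
noncomputable def OptPath (C : Couplings) (σ σ' : Config K L) (ω : Path K L) : Prop :=
  ω.FromTo σ σ' ∧ ω.height C = Phi K L C σ σ'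

/-- The configurations at which `H` attains its maximum along a path. -/
noncomputable def pathArgmax (C : Couplings) (ω : Path K L) : Set (Config K L) :=
  {ξ | (∃ n ≤ ω.len, ω.toFun n = ξ) ∧ H K L C ξ = ω.height C}

/-- The set of minimal saddles `S(σ, σ')`. -/
noncomputable def Saddles (C : Couplings) (σ σ' : Config K L) : Set (Config K L) :=
  {ξ | ∃ ω : Path K L, OptPath K L C σ σ' ω ∧ ξ ∈ pathArgmax K L C ω}

/-- `W` is a gate for the transition `σ → σ'`. -/
noncomputable def IsGate (C : Couplings) (σ σ' : Config K L) (W : Set (Config K L)) : Prop :=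
  W ⊆ Saddles K L C σ σ' ∧
    ∀ ω : Path K L, OptPath K L C σ σ' ω → ∃ n ≤ ω.len, ω.toFun n ∈ W

/-- `W` is a minimal gate for the transition `σ → σ'`. -/
noncomputable def IsMinimalGate (C : Couplings) (σ σ' : Config K L)
    (W : Set (Config K L)) : Prop :=
  IsGate K L C σ σ' W ∧
    ∀ W', W' ⊂ W → ∃ ω : Path K L, OptPath K L C σ σ' ω ∧ ∀ n ≤ ω.len, ω.toFun n ∉ W'

/-- `G(σ, σ')`: the union of all minimal gates for the transition `σ → σ'`. -/
noncomputable def gateUnion (C : Couplings) (σ σ' : Config K L) : Set (Config K L) :=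
  {ξ | ∃ W, IsMinimalGate K L C σ σ' W ∧ ξ ∈ W}

end Paths

section Geometry

variable (K L : ℕ)

/-- The `a × b` rectangle (`a` columns, `b` rows) with lower-left corner `(x0, y0)`. -/
def rectSet (x0 : ZMod K) (y0 : ZMod L) (a b : ℕ) : Set (Vtx K L) :=
  {v | ∃ i j : ℕ, i < a ∧ j < b ∧ v = (x0 + (i : ZMod K), y0 + (j : ZMod L))}

/-- A vertical bar of `l` consecutive cells in column `x` starting at row `y0`. -/
def barV (x : ZMod K) (y0 : ZMod L) (l : ℕ) : Set (Vtx K L) :=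
  {v | ∃ j : ℕ, j < l ∧ v = (x, y0 + (j : ZMod L))}

/-- A horizontal bar of `l` consecutive cells in row `y` starting at column `x0`. -/
def barH (x0 : ZMod K) (y : ZMod L) (l : ℕ) : Set (Vtx K L) :=
  {v | ∃ i : ℕ, i < l ∧ v = (x0 + (i : ZMod K), y)}

/-- The configuration with spin `s` exactly on the set `A` and spin `r` elsewhere. -/
noncomputable def onSet (A : Set (Vtx K L)) (r s : Spin) : Config K L :=
  fun v => @ite _ (v ∈ A) (Classical.dec _) s r

/-- `R_{a,b}(r,s)`: configurations equal to `r` everywhere except for spins `s` on an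
`a × b` rectangle. -/
noncomputable def Rconf (a b : ℕ) (r s : Spin) : Set (Config K L) :=
  {σ | ∃ x0 y0, σ = onSet K L (rectSet K L x0 y0 a b) r s}

/-- `B^l_{a,b}(r,s)`: configurations equal to `r` everywhere except for spins `s` on an
`a × b` rectangle together with a bar of `l` consecutive cells attached to one of the
(vertical) sides of length `b`. -/
noncomputable def Bconf (a b l : ℕ) (r s : Spin) : Set (Config K L) :=
  {σ | ∃ (x0 : ZMod K) (y0 : ZMod L) (x : ZMod K) (j0 : ℕ),
      (x = x0 - 1 ∨ x = x0 + (a : ZMod K)) ∧ j0 + l ≤ b ∧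
      σ = onSet K L (rectSet K L x0 y0 a b ∪ barV K L x (y0 + (j0 : ZMod L)) l) r s}

/-- `B̂^l_{a,b}(r,s)`: as `B^l_{a,b}(r,s)` but with the bar attached to one of the
(horizontal) sides of length `a`. -/
noncomputable def Bhat (a b l : ℕ) (r s : Spin) : Set (Config K L) :=
  {σ | ∃ (x0 : ZMod K) (y0 : ZMod L) (y : ZMod L) (i0 : ℕ),
      (y = y0 - 1 ∨ y = y0 + (b : ZMod L)) ∧ i0 + l ≤ a ∧
      σ = onSet K L (rectSet K L x0 y0 a b ∪ barH K L (x0 + (i0 : ZMod K)) y l) r s}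

/-- The critical set `W(𝐦, 𝟏) = B^1_{ℓ*−1,ℓ*}(m,1) ∪ B̂^1_{ℓ*,ℓ*−1}(m,1)`. -/
noncomputable def Wcrit (C : Couplings) (m : Spin) : Set (Config K L) :=
  Bconf K L (lstar C - 1) (lstar C) 1 m 0 ∪ Bhat K L (lstar C) (lstar C - 1) 1 m 0

/-- The set `W'(𝐦, 𝟏) = B̂^1_{ℓ*−1,ℓ*}(m,1) ∪ B^1_{ℓ*,ℓ*−1}(m,1)`. -/
noncomputable def Wcrit' (C : Couplings) (m : Spin) : Set (Config K L) :=
  Bhat K L (lstar C - 1) (lstar C) 1 m 0 ∪ Bconf K L (lstar C) (lstar C - 1) 1 m 0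

/-- The set `𝒫(𝐫, 𝐬)`. -/
noncomputable def Pgate (r s : Spin) : Set (Config K L) :=
  Bconf K L 1 K (K - 1) r s ∪ (if K = L then Bhat K L K 1 (K - 1) r s else ∅)

/-- The set `𝒬(𝐫, 𝐬)`. -/
noncomputable def Qgate (r s : Spin) : Set (Config K L) :=
  Rconf K L 2 (K - 1) r s ∪ Bconf K L 1 K (K - 2) r s ∪
    (if K = L then Rconf K L (K - 1) 2 r s ∪ Bhat K L K 1 (K - 2) r s else ∅)

/-- The set `ℋ_i(𝐫, 𝐬)`. -/
noncomputable def Hgate (i : ℕ) (r s : Spin) : Set (Config K L) :=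
  Bconf K L 1 K i r s ∪ (⋃ j ∈ Finset.Icc (i + 1) (K - 2), Bconf K L 1 (K - 1) j r s) ∪
    (if K = L then
      Bhat K L K 1 i r s ∪ ⋃ j ∈ Finset.Icc (i + 1) (K - 2), Bhat K L (K - 1) 1 j r s
    else ∅)

/-- The set `𝒲^h_j(𝐫, 𝐬)`. -/
noncomputable def Wgate (j h : ℕ) (r s : Spin) : Set (Config K L) :=
  Bconf K L j K h r s ∪ (if K = L then Bhat K L K j h r s else ∅)

/-- The admissible gate collection for the transition between `𝟐` and `𝟑`. -/
noncomputable def gateCollection : Set (Set (Config K L)) :=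
  {A | (∃ j h, 2 ≤ j ∧ j ≤ L - 3 ∧ 1 ≤ h ∧ h ≤ K - 1 ∧ A = Wgate K L j h 1 2)
    ∨ A = Qgate K L 1 2 ∨ A = Pgate K L 1 2 ∨ A = Pgate K L 2 1 ∨ A = Qgate K L 2 1
    ∨ (∃ i, 1 ≤ i ∧ i ≤ K - 3 ∧ A = Hgate K L i 1 2)
    ∨ (∃ i, 1 ≤ i ∧ i ≤ K - 3 ∧ A = Hgate K L i 2 1)}

/-- The union `𝒲(𝟐, 𝟑)` of all the plateau gates between `𝟐` and `𝟑`. -/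
noncomputable def W23 : Set (Config K L) :=
  (⋃ i ∈ Finset.Icc 1 (K - 3), Hgate K L i 1 2) ∪ Qgate K L 1 2 ∪ Pgate K L 1 2 ∪
    (⋃ j ∈ Finset.Icc 2 (L - 3), ⋃ h ∈ Finset.Icc 1 (K - 1), Wgate K L j h 1 2) ∪
    Pgate K L 2 1 ∪ Qgate K L 2 1 ∪ (⋃ i ∈ Finset.Icc 1 (K - 3), Hgate K L i 2 1)

/-- Nearest-neighbour adjacency on the torus. -/
def Adj (v w : Vtx K L) : Prop :=
  w = (v.1 + 1, v.2) ∨ w = (v.1 - 1, v.2) ∨ w = (v.1, v.2 + 1) ∨ w = (v.1, v.2 - 1)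

/-- An `r`-cluster of `σ`: a maximal connected set of vertices all having spin `r`. -/
def IsCluster (σ : Config K L) (r : Spin) (A : Set (Vtx K L)) : Prop :=
  A.Nonempty ∧ (∀ v ∈ A, σ v = r) ∧
    (∀ v ∈ A, ∀ w ∈ A,
      Relation.ReflTransGen (fun a b => a ∈ A ∧ b ∈ A ∧ Adj K L a b) v w) ∧
    (∀ v ∈ A, ∀ w, Adj K L v w → σ w = r → w ∈ A)

/-- A set of vertices is a rectangle: the product of a set of consecutive columns and a set
of consecutive rows of the torus. -/
def IsRectangle (A : Set (Vtx K L)) : Prop :=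
  ∃ (x0 : ZMod K) (y0 : ZMod L) (a b : ℕ), a ≤ K ∧ b ≤ L ∧ A = rectSet K L x0 y0 a b

end Geometry

section LocalMin

variable (K L : ℕ) [NeZero K] [NeZero L]

/-- The set `M` of strict local minima of `H`. -/
noncomputable def Mset (C : Couplings) : Set (Config K L) :=
  {σ | ∀ σ', SingleFlip K L σ σ' → H K L C σ < H K L C σ'}

/-- A stable plateau: a nonempty set of configurations of constant energy, connected under
single spin flips, such that every configuration outside it reachable by a single spin flip
has strictly larger energy. -/
noncomputable def IsStablePlateau (C : Couplings) (D : Set (Config K L)) : Prop :=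
  D.Nonempty ∧ (∃ c, ∀ σ ∈ D, H K L C σ = c) ∧
    (∀ σ ∈ D, ∀ η ∈ D,
      Relation.ReflTransGen (fun a b => a ∈ D ∧ b ∈ D ∧ SingleFlip K L a b) σ η) ∧
    (∀ σ ∈ D, ∀ σ', SingleFlip K L σ σ' → σ' ∉ D → H K L C σ < H K L C σ')

/-- The union `M̄` of all stable plateaux. -/
noncomputable def Mbar (C : Couplings) : Set (Config K L) :=
  {σ | ∃ D, IsStablePlateau K L C D ∧ σ ∈ D}

end LocalMin

end GenPotts

/-!
Write `N` for the number of spins `1` of `σ` (spin `0` in the code) and `nᵢⱼ` for its edge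
counts. The projection changes the energy by `γ₁ n₁₁ - γ₁₂ n₁₂ - (γ₁₂ - γ₂₃) n₁₃`, and
counting edge ends gives `2 n₁₁ + n₁₂ + n₁₃ = 4 N`. If the spins `1` occupy `r` rows and
`c` columns, then `N ≤ r c`, and since `N < K ≤ L` none of these rows or columns is full,
so each of them contains one more spin `1` than it has internal `11`-edges:
`n₁₁ ≤ 2 N - r - c ≤ 2 N - 2 √N`. The energy change is therefore at most
`2 √N (γ₁ √N - γ₁ - 2 (γ₁₂ - γ₂₃))`, which is negative because `√N ≤ ℓ*` and
`γ₁ ℓ* < γ₁ + 2 (γ₁₂ - γ₂₃)` by assumption (C).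
-/

namespace Finset

variable {G : Type*} [AddGroup G] [DecidableEq G]

theorem card_filter_add_mem_lt {S : Finset G} {g : G} (hS : S.Nonempty)
    (hcard : #S < addOrderOf g) : #{x ∈ S | x + g ∈ S} < #S := by
  -- a set closed under `+ g` contains the whole orbit `x₀ + k • g`, of size `addOrderOf g`
  refine card_lt_card ⟨filter_subset _ _, fun hsub => hcard.not_ge ?_⟩
  obtain ⟨x₀, hx₀⟩ := hS
  have hmem : ∀ k : ℕ, x₀ + k • g ∈ S := by
    intro k
    induction k with
    | zero => simpa using hx₀
    | succ k ih => simpa [succ_nsmul, add_assoc] using (mem_filter.mp (hsub ih)).2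
  calc addOrderOf g = #((range (addOrderOf g)).image (x₀ + · • g)) := by
        rw [card_image_of_injOn, card_range]
        intro i hi j hj hij
        exact nsmul_injOn_Iio_addOrderOf (by simpa using hi) (by simpa using hj)
          (add_left_cancel hij)
    _ ≤ #S := card_le_card (image_subset_iff.mpr fun k _ => hmem k)

theorem card_filter_add_mem_add_card_image_le {β : Type*} [DecidableEq β] {S : Finset G}
    {g : G} (f : G → β) (hf : ∀ x, f (x + g) = f x) (hcard : #S < addOrderOf g) :
    #{x ∈ S | x + g ∈ S} + #(S.image f) ≤ #S := by
  rw [card_eq_sum_card_image f S, card_eq_sum_card_fiberwise (f := f) (t := S.image f)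
    (fun x hx => mem_image_of_mem f (mem_filter.mp hx).1), card_eq_sum_ones (S.image f),
    ← sum_add_distrib]
  refine sum_le_sum fun b hb => ?_
  obtain ⟨x, hx, rfl⟩ := mem_image.mp hb
  have hfiber := card_filter_add_mem_lt (S := {y ∈ S | f y = f x}) (g := g)
    ⟨x, by simp [hx]⟩ ((card_le_card (filter_subset _ _)).trans_lt hcard)
  rw [filter_filter] at hfiber ⊢
  refine lt_of_le_of_lt (card_le_card fun y hy => ?_) hfiber
  simp only [mem_filter] at hy ⊢
  exact ⟨hy.1, hy.2.2, hy.2.1, (hf y).trans hy.2.2⟩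

theorem card_le_card_image_fst_mul_card_image_snd {α β : Type*} [DecidableEq α]
    [DecidableEq β] (S : Finset (α × β)) : #S ≤ #(S.image Prod.fst) * #(S.image Prod.snd) :=
  card_product _ _ ▸ card_le_card subset_product

end Finset

namespace GenPotts

section Potts

open Finset

variable {K L : ℕ}

def unitStep (b : Bool) : Vtx K L := if b then (1, 0) else (0, 1)

theorem proj_apply_ne {r s : Spin} (hrs : r ≠ s) (σ : Config K L) (v : Vtx K L) :
    proj K L r s σ v ≠ r := by
  unfold proj
  split_ifs with h
  exacts [hrs.symm, h]

variable [NeZero K] [NeZero L]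

def zeros (σ : Config K L) : Finset (Vtx K L) := {v | σ v = 0}

theorem proj_eq_self_of_nVtx_eq_zero {σ : Config K L} {r : Spin} (s : Spin)
    (h : nVtx K L σ r = 0) : proj K L r s σ = σ := by
  rw [nVtx, card_eq_zero, filter_eq_empty_iff] at h
  funext v
  simp [proj, h (mem_univ v)]

theorem nEdge_eq_sum (σ : Config K L) (i j : Spin) :
    nEdge K L σ i j = ∑ p : Vtx K L × Bool,
      if (σ p.1 = i ∧ σ (p.1 + unitStep p.2) = j) ∨ (σ p.1 = j ∧ σ (p.1 + unitStep p.2) = i)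
      then 1 else 0 := by
  rw [nEdge, card_filter]
  refine sum_congr rfl fun p _ => ?_
  obtain ⟨⟨x, y⟩, _ | _⟩ := p <;> simp [unitStep]

theorem nEdge_proj_self_left {r s : Spin} (hrs : r ≠ s) (σ : Config K L) (j : Spin) :
    nEdge K L (proj K L r s σ) r j = 0 := by
  simp [nEdge_eq_sum, proj_apply_ne hrs]

theorem nEdge_proj_zero_one_one_one (σ : Config K L) :
    nEdge K L (proj K L 0 1 σ) 1 1 = nEdge K L σ 1 1 + nEdge K L σ 0 0 + nEdge K L σ 0 1 := by
  simp only [nEdge_eq_sum, ← sum_add_distrib]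
  refine sum_congr rfl fun p _ => ?_
  unfold proj
  generalize σ p.1 = a, σ (p.1 + unitStep p.2) = b
  revert a b; decide

theorem nEdge_proj_zero_one_one_two (σ : Config K L) :
    nEdge K L (proj K L 0 1 σ) 1 2 = nEdge K L σ 1 2 + nEdge K L σ 0 2 := by
  simp only [nEdge_eq_sum, ← sum_add_distrib]
  refine sum_congr rfl fun p _ => ?_
  unfold proj
  generalize σ p.1 = a, σ (p.1 + unitStep p.2) = b
  revert a b; decide

theorem nEdge_proj_zero_one_two_two (σ : Config K L) :
    nEdge K L (proj K L 0 1 σ) 2 2 = nEdge K L σ 2 2 := by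
  simp only [nEdge_eq_sum]
  refine sum_congr rfl fun p _ => ?_
  unfold proj
  generalize σ p.1 = a, σ (p.1 + unitStep p.2) = b
  revert a b; decide

theorem H_proj_zero_one_sub {C : Couplings} (hJ : C.J12 = C.J13) (σ : Config K L) :
    H K L C (proj K L 0 1 σ) - H K L C σ =
      C.γ1 * nEdge K L σ 0 0 - C.γ12 * nEdge K L σ 0 1
        - (C.γ12 - C.γ23) * nEdge K L σ 0 2 := by
  simp only [H, nEdge_proj_self_left (show (0 : Spin) ≠ 1 by decide),
    nEdge_proj_zero_one_one_one, nEdge_proj_zero_one_one_two, nEdge_proj_zero_one_two_two,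
    Couplings.γ1, Couplings.γ12, Couplings.γ23]
  push_cast
  linear_combination (nEdge K L σ 0 2 : ℝ) * hJ

/-- Each vertex of spin `0` has four incident edges; an edge between two of them is counted
twice. -/
theorem two_mul_nEdge_add_nEdge_add_nEdge (σ : Config K L) :
    2 * nEdge K L σ 0 0 + nEdge K L σ 0 1 + nEdge K L σ 0 2 = 4 * nVtx K L σ 0 := by
  have hends : 2 * nEdge K L σ 0 0 + nEdge K L σ 0 1 + nEdge K L σ 0 2 =
      ∑ p : Vtx K L × Bool,
        ((if σ p.1 = 0 then 1 else 0) + if σ (p.1 + unitStep p.2) = 0 then 1 else 0) := by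
    simp only [nEdge_eq_sum, mul_sum, ← sum_add_distrib]
    refine sum_congr rfl fun p _ => ?_
    generalize σ p.1 = a, σ (p.1 + unitStep p.2) = b
    revert a b; decide
  have hshift (b : Bool) : ∑ v : Vtx K L, (if σ (v + unitStep b) = 0 then 1 else 0) =
      nVtx K L σ 0 := by
    rw [nVtx, card_filter]
    exact Equiv.sum_comp (Equiv.addRight (unitStep b)) (fun v => if σ v = 0 then 1 else 0)
  have hcount : ∑ v : Vtx K L, (if σ v = 0 then 1 else 0) = nVtx K L σ 0 :=
    (card_filter _ _).symm
  rw [hends, Fintype.sum_prod_type_right, Fintype.sum_bool]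
  simp only [sum_add_distrib, hshift, hcount]
  ring

theorem nEdge_zero_zero_eq (σ : Config K L) :
    nEdge K L σ 0 0 = #{v ∈ zeros σ | v + unitStep true ∈ zeros σ} +
      #{v ∈ zeros σ | v + unitStep false ∈ zeros σ} := by
  simp only [nEdge_eq_sum, Fintype.sum_prod_type_right, Fintype.sum_bool, card_filter,
    sum_filter, zeros, mem_filter, mem_univ, true_and, or_self, ite_and]

theorem nEdge_zero_zero_add_card_image_le (σ : Config K L) (hK : nVtx K L σ 0 < K)
    (hL : nVtx K L σ 0 < L) :
    nEdge K L σ 0 0 + #((zeros σ).image Prod.snd) + #((zeros σ).image Prod.fst) ≤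
      2 * nVtx K L σ 0 := by
  change #(zeros σ) < K at hK
  change #(zeros σ) < L at hL
  have hrows := card_filter_add_mem_add_card_image_le (S := zeros σ) (g := unitStep true)
    Prod.snd (fun v => by simp [unitStep]) (by simpa [unitStep, Prod.addOrderOf_mk] using hK)
  have hcols := card_filter_add_mem_add_card_image_le (S := zeros σ) (g := unitStep false)
    Prod.fst (fun v => by simp [unitStep]) (by simpa [unitStep, Prod.addOrderOf_mk] using hL)
  rw [nEdge_zero_zero_eq]
  change _ ≤ 2 * #(zeros σ)
  omega

/-- The spin-`0` vertices lie in the product of the rows and the columns they occupy, so by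
AM-GM these number at least `2 √N` together. -/
theorem nEdge_zero_zero_add_two_sqrt_le (σ : Config K L) (hK : nVtx K L σ 0 < K)
    (hL : nVtx K L σ 0 < L) :
    (nEdge K L σ 0 0 : ℝ) + 2 * √(nVtx K L σ 0) ≤ 2 * nVtx K L σ 0 := by
  have hbox : (nVtx K L σ 0 : ℝ) ≤
      #((zeros σ).image Prod.snd) * #((zeros σ).image Prod.fst) := by
    rw [mul_comm]
    exact_mod_cast card_le_card_image_fst_mul_card_image_snd (zeros σ)
  have hamgm := two_mul_le_add_of_sq_le_mul (Nat.cast_nonneg _) (Nat.cast_nonneg _)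
    ((Real.sq_sqrt (Nat.cast_nonneg _)).trans_le hbox)
  have hiso : ((nEdge K L σ 0 0 + #((zeros σ).image Prod.snd) +
      #((zeros σ).image Prod.fst) : ℕ) : ℝ) ≤ (2 * nVtx K L σ 0 : ℕ) := by
    exact_mod_cast nEdge_zero_zero_add_card_image_le σ hK hL
  push_cast at hiso
  linarith

end Potts

theorem energy_gap_neg {γ₁ γ₁₂ γ₂₃ a b c N ℓ : ℝ} (hγ₁ : 0 ≤ γ₁) (hγ₂₃ : 0 ≤ γ₂₃)
    (hb : 0 ≤ b) (hdeg : 2 * a + b + c = 4 * N) (hiso : a + 2 * √N ≤ 2 * N) (hN : 0 < N)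
    (hNℓ : √N ≤ ℓ) (hℓ : γ₁ * ℓ < γ₁ + 2 * (γ₁₂ - γ₂₃)) :
    γ₁ * a - γ₁₂ * b - (γ₁₂ - γ₂₃) * c < 0 := by
  set s := √N
  have hs : 0 < s := Real.sqrt_pos.mpr hN
  have hNs : N = s ^ 2 := (Real.sq_sqrt hN.le).symm
  have hslope : 0 ≤ γ₁ + 2 * (γ₁₂ - γ₂₃) := by nlinarith [hs.le.trans hNℓ]
  calc γ₁ * a - γ₁₂ * b - (γ₁₂ - γ₂₃) * c
      ≤ (γ₁ + 2 * (γ₁₂ - γ₂₃)) * a - 4 * (γ₁₂ - γ₂₃) * N := by nlinarith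
    _ ≤ (γ₁ + 2 * (γ₁₂ - γ₂₃)) * (2 * N - 2 * s) - 4 * (γ₁₂ - γ₂₃) * N := by
        gcongr; linarith
    _ = 2 * s * (γ₁ * s - (γ₁ + 2 * (γ₁₂ - γ₂₃))) := by rw [hNs]; ring
    _ < 0 := mul_neg_of_pos_of_neg (by positivity) (by nlinarith)

namespace Admissible

variable {K L : ℕ} {C : Couplings}

theorem γ1_pos (h : Admissible K L C) : 0 < C.γ1 := sub_pos.mpr h.h1122

theorem γ23_pos (h : Admissible K L C) : 0 < C.γ23 := add_pos h.pos23 h.pos22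

theorem γ1_mul_lstar_lt (h : Admissible K L C) :
    C.γ1 * lstar C < C.γ1 + 2 * (C.γ12 - C.γ23) := by
  have hγ₁ := h.γ1_pos
  have hceil : (lstar C : ℝ) < (2 * C.γ12 + C.γ1) / (2 * C.γ1) + 1 :=
    Nat.ceil_lt_add_one (div_nonneg (by linarith [h.γ23_pos, h.hC]) (by linarith))
  have hscaled : C.γ1 * ((2 * C.γ12 + C.γ1) / (2 * C.γ1) + 1) = C.γ12 + 3 / 2 * C.γ1 := by
    field_simp
    ring
  nlinarith [h.hC]

end Admissible

theorem H_proj_zero_one_lt {K L : ℕ} [NeZero K] [NeZero L] {C : Couplings}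
    (hadm : Admissible K L C) {σ : Config K L} (hN : 0 < nVtx K L σ 0)
    (hℓ : nVtx K L σ 0 ≤ lstar C ^ 2) : H K L C (proj K L 0 1 σ) < H K L C σ := by
  have hNK : nVtx K L σ 0 < K := by
    have := hadm.hK
    omega
  rw [← sub_neg, H_proj_zero_one_sub hadm.h1213]
  refine energy_gap_neg hadm.γ1_pos.le hadm.γ23_pos.le (Nat.cast_nonneg _) ?_
    (nEdge_zero_zero_add_two_sqrt_le σ hNK (hNK.trans_le hadm.hKL)) (by exact_mod_cast hN)
    ?_ hadm.γ1_mul_lstar_lt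
  · exact_mod_cast two_mul_nEdge_add_nEdge_add_nEdge σ
  · exact (Real.sqrt_le_sqrt (by exact_mod_cast hℓ)).trans_eq
      (Real.sqrt_sq (Nat.cast_nonneg _))

theorem projection_one_to_two_general (K L : ℕ) [NeZero K] [NeZero L] (C : Couplings)
    (hadm : Admissible K L C)
    (σ : Config K L)
    (h2 : nVtx K L σ 0 ≤ lstar C ^ 2) :
    H K L C (proj K L 0 1 σ) ≤ H K L C σ ∧
    (H K L C (proj K L 0 1 σ) = H K L C σ ↔ nVtx K L σ 0 = 0) := by
  rcases (nVtx K L σ 0).eq_zero_or_pos with hN | hN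
  · rw [proj_eq_self_of_nVtx_eq_zero 1 hN]
    exact ⟨le_rfl, iff_of_true rfl hN⟩
  · have hlt := H_proj_zero_one_lt hadm hN h2
    exact ⟨hlt.le, iff_of_false hlt.ne hN.ne'⟩

theorem projection_one_to_two (K L : ℕ) [NeZero K] [NeZero L] (C : Couplings)
    (hadm : Admissible K L C)
    (σ : Config K L)
    (h1 : H K L C σ - H K L C (const K L 1) ≤ Γstar C)
    (h2 : nVtx K L σ 0 ≤ lstar C ^ 2) :
    H K L C (proj K L 0 1 σ) ≤ H K L C σ ∧
    (H K L C (proj K L 0 1 σ) = H K L C σ ↔ nVtx K L σ 0 = 0) :=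
  projection_one_to_two_general K L C hadm σ h2

end GenPotts
end

section
/- The communication heights from the metastable states to the stable state are bounded below by Γ*: Γ(𝟐,𝟏) = Γ(𝟑,𝟏) ≥ Γ*. -/
namespace GenPotts

/-!
Exchanging the spins `2` and `3` preserves `H` because `J₂₂ = J₃₃` and `J₁₂ = J₁₃`, so the two
barriers coincide. The number of spin-`1` vertices changes by at most one per step, hence every
path from `𝟐` to `𝟏` visits a configuration `σ` with exactly `n = ℓ*² - ℓ* + 1` of them. As
`n < K ≤ L`, this droplet contains no full row or column, and as `n > ℓ*(ℓ* - 1)` it meets at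
least `2ℓ*` rows and columns in total, each crossed by two boundary edges: its perimeter `p` is at
least `4ℓ*`. Counting the edges around the droplet,
`H(σ) - H(𝟐) ≥ (γ₁₂ + γ₁/2) p - 2γ₁ n ≥ 4ℓ*(γ₁₂ + γ₁/2) - 2γ₁ n = Γ*`.
-/

open Finset

section Relabel

variable {K L : ℕ} [NeZero K] [NeZero L]

lemma nEdge_comm (σ : Config K L) (i j : Spin) : nEdge K L σ i j = nEdge K L σ j i := by
  simp only [nEdge, or_comm]

lemma nEdge_comp (e : Spin ≃ Spin) (σ : Config K L) (i j : Spin) :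
    nEdge K L (e ∘ σ) i j = nEdge K L σ (e.symm i) (e.symm j) := by
  simp only [nEdge, Function.comp_apply, ← Equiv.eq_symm_apply]

lemma H_swap_comp (C : Couplings) (h22 : C.J22 = C.J33) (h12 : C.J12 = C.J13)
    (σ : Config K L) : H K L C (Equiv.swap 1 2 ∘ σ) = H K L C σ := by
  simp only [H, nEdge_comp, Equiv.symm_swap]
  simp only [show Equiv.swap (1 : Spin) 2 0 = 0 by decide, Equiv.swap_apply_left,
    Equiv.swap_apply_right, nEdge_comm σ 2 1]
  linear_combination ((nEdge K L σ 1 1 : ℝ) - nEdge K L σ 2 2) * h22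
    + ((nEdge K L σ 0 2 : ℝ) - nEdge K L σ 0 1) * h12

def Path.map (e : Spin ≃ Spin) (ω : Path K L) : Path K L where
  len := ω.len
  toFun n := e ∘ ω.toFun n
  step n hn := by
    obtain ⟨v, hv, hw⟩ := ω.step n hn
    exact ⟨v, e.injective.ne hv, fun w hwv => congrArg e (hw w hwv)⟩

variable {C : Couplings} {e : Spin ≃ Spin}

lemma Path.height_map (he : ∀ σ : Config K L, H K L C (e ∘ σ) = H K L C σ) (ω : Path K L) :
    (ω.map e).height C = ω.height C :=
  Finset.sup'_congr _ rfl fun n _ => he (ω.toFun n)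

lemma Phi_comp (he : ∀ σ : Config K L, H K L C (e ∘ σ) = H K L C σ) (σ σ' : Config K L) :
    Phi K L C (e ∘ σ) (e ∘ σ') = Phi K L C σ σ' := by
  have heights_subset : ∀ e : Spin ≃ Spin, (∀ σ : Config K L, H K L C (e ∘ σ) = H K L C σ) →
      ∀ σ σ' : Config K L, {x | ∃ ω : Path K L, ω.FromTo σ σ' ∧ ω.height C = x} ⊆
        {x | ∃ ω : Path K L, ω.FromTo (e ∘ σ) (e ∘ σ') ∧ ω.height C = x} := by
    rintro e he σ σ' _ ⟨ω, ⟨h₀, h₁⟩, rfl⟩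
    exact ⟨ω.map e, ⟨congrArg (e ∘ ·) h₀, congrArg (e ∘ ·) h₁⟩, ω.height_map he⟩
  have he_symm : ∀ σ : Config K L, H K L C (e.symm ∘ σ) = H K L C σ := fun σ => by
    simpa [← Function.comp_assoc] using (he (e.symm ∘ σ)).symm
  refine congrArg sInf (subset_antisymm ?_ (heights_subset e he σ σ'))
  simpa [← Function.comp_assoc] using heights_subset e.symm he_symm (e ∘ σ) (e ∘ σ')

lemma Gamma_comp (he : ∀ σ : Config K L, H K L C (e ∘ σ) = H K L C σ) (σ σ' : Config K L) :
    Gamma K L C (e ∘ σ) (e ∘ σ') = Gamma K L C σ σ' := by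
  rw [Gamma, Gamma, Phi_comp he, he]

end Relabel

section Paths

variable {K L : ℕ} [NeZero K] [NeZero L]

lemma Path.le_height (ω : Path K L) (C : Couplings) {n : ℕ} (hn : n ≤ ω.len) :
    H K L C (ω.toFun n) ≤ ω.height C :=
  Finset.le_sup' (fun n => H K L C (ω.toFun n)) (mem_range.mpr (Nat.lt_succ_of_le hn))

lemma le_Phi_of_forall_path {C : Couplings} {σ σ' : Config K L} {c : ℝ}
    (hne : ∃ ω : Path K L, ω.FromTo σ σ')
    (h : ∀ ω : Path K L, ω.FromTo σ σ' → ∃ n ≤ ω.len, c ≤ H K L C (ω.toFun n)) :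
    c ≤ Phi K L C σ σ' := by
  obtain ⟨ω₀, h₀⟩ := hne
  refine le_csInf ⟨_, ω₀, h₀, rfl⟩ ?_
  rintro _ ⟨ω, hω, rfl⟩
  obtain ⟨n, hn, hc⟩ := h ω hω
  exact hc.trans (ω.le_height C hn)

lemma exists_path_of_forall_ne (σ σ' : Config K L) (hd : ∀ v, σ v ≠ σ' v) :
    ∃ ω : Path K L, ω.FromTo σ σ' := by
  let e := Fintype.equivFin (Vtx K L)
  refine ⟨⟨Fintype.card (Vtx K L), fun n v => if (e v : ℕ) < n then σ' v else σ v, ?_⟩, ?_, ?_⟩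
  · intro n hn
    refine ⟨e.symm ⟨n, hn⟩, by simpa using hd _, fun w hwv => ?_⟩
    have hne : (e w : ℕ) ≠ n := fun h => hwv (e.eq_symm_apply.mpr (Fin.ext h))
    by_cases hlt : (e w : ℕ) < n
    · simp [hlt, hlt.trans (Nat.lt_succ_self n)]
    · simp [hlt, show ¬ (e w : ℕ) < n + 1 by omega]
  · funext v; simp
  · funext v; exact if_pos (e v).isLt

lemma exists_eq_of_forall_succ_le_add_one (g : ℕ → ℕ) {m t : ℕ}
    (hstep : ∀ k < m, g (k + 1) ≤ g k + 1) (h₀ : g 0 ≤ t) (hm : t ≤ g m) :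
    ∃ k ≤ m, g k = t := by
  induction m with
  | zero => exact ⟨0, le_rfl, le_antisymm h₀ hm⟩
  | succ m ih =>
    by_cases h : t ≤ g m
    · obtain ⟨k, hk, hgk⟩ := ih (fun k hk => hstep k (by omega)) h
      exact ⟨k, by omega, hgk⟩
    · exact ⟨m + 1, le_rfl, by have := hstep m (by omega); omega⟩

lemma nVtx_le_of_singleFlip {σ σ' : Config K L} (h : SingleFlip K L σ σ') (i : Spin) :
    nVtx K L σ' i ≤ nVtx K L σ i + 1 := by
  obtain ⟨v, -, hw⟩ := h
  refine (card_le_card fun w hw' => ?_).trans (card_insert_le v _)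
  by_cases hwv : w = v
  · subst hwv; exact mem_insert_self _ _
  · exact mem_insert_of_mem (by simpa [hw w hwv] using hw')

lemma Path.exists_nVtx_eq (ω : Path K L) (i : Spin) {t : ℕ}
    (h₀ : nVtx K L (ω.toFun 0) i ≤ t) (h₁ : t ≤ nVtx K L (ω.toFun ω.len) i) :
    ∃ k ≤ ω.len, nVtx K L (ω.toFun k) i = t :=
  exists_eq_of_forall_succ_le_add_one (fun k => nVtx K L (ω.toFun k) i)
    (fun k hk => nVtx_le_of_singleFlip (ω.step k hk) i) h₀ h₁

end Paths

section Cycle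

variable {M : ℕ} [NeZero M]

lemma exists_mem_add_one_notMem {s : Finset (ZMod M)} (hs : s.Nonempty) (hs' : s ≠ univ) :
    ∃ y ∈ s, y + 1 ∉ s := by
  by_contra! hclosed
  obtain ⟨a, ha⟩ := hs
  have hmem : ∀ k : ℕ, a + k ∈ s := fun k => by
    induction k with
    | zero => simpa using ha
    | succ k ih => simpa [add_assoc] using hclosed _ ih
  exact hs' (eq_univ_of_forall fun b => by simpa using hmem (b - a).val)

/-- A proper nonempty subset of a cycle is entered and left at least once each. -/
lemma two_le_card_jumps {s : Finset (ZMod M)} (hs : s.Nonempty) (hs' : s ≠ univ) :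
    2 ≤ #{y | Xor (y ∈ s) (y + 1 ∈ s)} := by
  obtain ⟨y₁, hy₁, hy₁'⟩ := exists_mem_add_one_notMem hs hs'
  obtain ⟨y₂, hy₂, hy₂'⟩ := exists_mem_add_one_notMem (s := sᶜ)
    (by rwa [nonempty_iff_ne_empty, Ne, compl_eq_empty_iff]) ((compl_ne_univ_iff_nonempty s).mpr hs)
  rw [mem_compl] at hy₂
  rw [mem_compl, not_not] at hy₂'
  refine one_lt_card.mpr ⟨y₁, ?_, y₂, ?_, fun h => hy₂ (h ▸ hy₁)⟩ <;> simp [xor_def, *]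

lemma two_mul_card_le_sum_card_jumps {ι : Type*} [Fintype ι] (S : Finset ι)
    (F : ι → Finset (ZMod M)) (hne : ∀ i ∈ S, (F i).Nonempty) (hfull : ∀ i, F i ≠ univ) :
    2 * #S ≤ ∑ i, #{y | Xor (y ∈ F i) (y + 1 ∈ F i)} :=
  calc 2 * #S = ∑ _i ∈ S, 2 := by rw [sum_const, smul_eq_mul, mul_comm]
    _ ≤ ∑ i ∈ S, #{y | Xor (y ∈ F i) (y + 1 ∈ F i)} :=
        sum_le_sum fun i hi => two_le_card_jumps (hne i hi) (hfull i)
    _ ≤ _ := sum_le_univ_sum_of_nonneg fun _ => Nat.zero_le _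

end Cycle

lemma two_mul_le_add_of_mul_lt {c r ℓ : ℕ} (h : ℓ * ℓ < c * r + ℓ) : 2 * ℓ ≤ c + r := by
  by_contra! hlt
  have hsq : 4 * (c * r) ≤ (c + r) * (c + r) := by nlinarith [sq_nonneg ((c : ℤ) - r)]
  nlinarith

section Torus

variable {K L : ℕ} [NeZero K] [NeZero L]

/-- The second endpoint of the edge encoded by `p` in `nEdge`. -/
def edgeEnd (p : Vtx K L × Bool) : Vtx K L :=
  if p.2 then (p.1.1 + 1, p.1.2) else (p.1.1, p.1.2 + 1)

def edgeBoundary (A : Finset (Vtx K L)) : Finset (Vtx K L × Bool) :=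
  {p | Xor (p.1 ∈ A) (edgeEnd p ∈ A)}

lemma sum_edgeEnd {β : Type*} [AddCommMonoid β] (f : Vtx K L → β) :
    ∑ p : Vtx K L × Bool, f (edgeEnd p) = 2 • ∑ v, f v := by
  have hx := Equiv.sum_comp ((Equiv.addRight (1 : ZMod K)).prodCongr (Equiv.refl _)) f
  have hy := Equiv.sum_comp ((Equiv.refl (ZMod K)).prodCongr (Equiv.addRight (1 : ZMod L))) f
  simp only [Equiv.prodCongr_apply, Prod.map, Equiv.coe_addRight, Equiv.coe_refl, id] at hx hy
  rw [Fintype.sum_prod_type_right, Fintype.sum_bool]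
  simp only [edgeEnd, if_true, Bool.false_eq_true, if_false]
  rw [hx, hy, two_nsmul]

/-- Each vertex of `A` has four incident edges: inner edges count twice, boundary edges once. -/
lemma card_edgeBoundary_add_two_mul (A : Finset (Vtx K L)) :
    #(edgeBoundary A) + 2 * #{p : Vtx K L × Bool | p.1 ∈ A ∧ edgeEnd p ∈ A} = 4 * #A :=
  calc #(edgeBoundary A) + 2 * #{p : Vtx K L × Bool | p.1 ∈ A ∧ edgeEnd p ∈ A}
      = ∑ p : Vtx K L × Bool, ((if p.1 ∈ A then 1 else 0) + if edgeEnd p ∈ A then 1 else 0) := by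
        rw [edgeBoundary, card_filter, card_filter, mul_sum, ← sum_add_distrib]
        refine sum_congr rfl fun p _ => ?_
        by_cases h₁ : p.1 ∈ A <;> by_cases h₂ : edgeEnd p ∈ A <;> simp [xor_def, h₁, h₂]
    _ = 4 * #A := by
        rw [sum_add_distrib, sum_edgeEnd (fun v => if v ∈ A then 1 else 0),
          Fintype.sum_prod_type_right (α₂ := Bool)]
        simp only [sum_const, card_univ, Fintype.card_bool, sum_boole, filter_mem_eq_inter,
          univ_inter, Nat.cast_id, smul_eq_mul]
        ring

lemma card_edgeBoundary (A : Finset (Vtx K L)) :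
    #(edgeBoundary A) = ∑ y, #{x | Xor ((x, y) ∈ A) ((x + 1, y) ∈ A)}
      + ∑ x, #{y | Xor ((x, y) ∈ A) ((x, y + 1) ∈ A)} := by
  rw [edgeBoundary, card_filter, Fintype.sum_prod_type_right (α₂ := Bool), Fintype.sum_bool]
  simp only [edgeEnd, if_true, Bool.false_eq_true, if_false, card_filter]
  rw [Fintype.sum_prod_type_right, Fintype.sum_prod_type]

/-- Discrete isoperimetric inequality: a set of more than `ℓ(ℓ - 1)` vertices that wraps around
neither direction of the torus meets at least `2ℓ` rows and columns, each contributing two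
boundary edges. -/
lemma four_mul_le_card_edgeBoundary (A : Finset (Vtx K L)) (hK : #A < K) (hL : #A < L) {ℓ : ℕ}
    (hℓ : ℓ * ℓ < #A + ℓ) : 4 * ℓ ≤ #(edgeBoundary A) := by
  set cols := A.image Prod.fst
  set rows := A.image Prod.snd
  have hcol_full : ∀ x, ({y | (x, y) ∈ A} : Finset (ZMod L)) ≠ univ := fun x h => by
    have := card_le_card_of_injOn (fun y => (x, y)) (s := univ) (t := A)
      (fun y _ => by simpa using eq_univ_iff_forall.mp h y) (fun _ _ _ _ => congrArg Prod.snd)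
    simp [ZMod.card] at this; omega
  have hrow_full : ∀ y, ({x | (x, y) ∈ A} : Finset (ZMod K)) ≠ univ := fun y h => by
    have := card_le_card_of_injOn (fun x => (x, y)) (s := univ) (t := A)
      (fun x _ => by simpa using eq_univ_iff_forall.mp h x) (fun _ _ _ _ => congrArg Prod.fst)
    simp [ZMod.card] at this; omega
  have hcols := two_mul_card_le_sum_card_jumps cols (fun x => {y | (x, y) ∈ A})
    (fun x hx => by obtain ⟨v, hv, rfl⟩ := mem_image.mp hx; exact ⟨v.2, by simpa using hv⟩)
    hcol_full
  have hrows := two_mul_card_le_sum_card_jumps rows (fun y => {x | (x, y) ∈ A})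
    (fun y hy => by obtain ⟨v, hv, rfl⟩ := mem_image.mp hy; exact ⟨v.1, by simpa using hv⟩)
    hrow_full
  have hprod : #A ≤ #cols * #rows := card_product cols rows ▸ card_le_card subset_product
  have hℓ' : 2 * ℓ ≤ #cols + #rows :=
    two_mul_le_add_of_mul_lt (lt_of_lt_of_le hℓ (by gcongr))
  simp only [mem_filter, mem_univ, true_and] at hcols hrows
  rw [card_edgeBoundary]
  omega

end Torus

section Energy

variable {K L : ℕ} [NeZero K] [NeZero L]

lemma nEdge_eq_card (σ : Config K L) (i j : Spin) :
    nEdge K L σ i j = #{p : Vtx K L × Bool |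
      (σ p.1 = i ∧ σ (edgeEnd p) = j) ∨ (σ p.1 = j ∧ σ (edgeEnd p) = i)} := rfl

def spinSet (σ : Config K L) (i : Spin) : Finset (Vtx K L) := {v | σ v = i}

lemma card_spinSet (σ : Config K L) (i : Spin) : #(spinSet σ i) = nVtx K L σ i := rfl

lemma nVtx_const (r i : Spin) : nVtx K L (const K L r) i = if r = i then K * L else 0 := by
  split_ifs with h <;> simp [nVtx, const, h, ZMod.card]

lemma nEdge_zero_one_add_nEdge_zero_two (σ : Config K L) :
    nEdge K L σ 0 1 + nEdge K L σ 0 2 = #(edgeBoundary (spinSet σ 0)) := by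
  rw [nEdge_eq_card, nEdge_eq_card, edgeBoundary, card_filter, card_filter, card_filter,
    ← sum_add_distrib]
  refine sum_congr rfl fun p _ => ?_
  simp only [spinSet, mem_filter, mem_univ, true_and]
  generalize σ p.1 = a, σ (edgeEnd p) = b
  revert a b; decide

lemma nEdge_zero_zero (σ : Config K L) :
    nEdge K L σ 0 0 = #{p : Vtx K L × Bool | p.1 ∈ spinSet σ 0 ∧ edgeEnd p ∈ spinSet σ 0} := by
  simp only [nEdge_eq_card, spinSet, mem_filter, mem_univ, true_and, or_self]

lemma sum_nEdge (σ : Config K L) :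
    nEdge K L σ 0 0 + nEdge K L σ 1 1 + nEdge K L σ 2 2 + nEdge K L σ 0 1 + nEdge K L σ 0 2
      + nEdge K L σ 1 2 = Fintype.card (Vtx K L × Bool) := by
  simp only [nEdge_eq_card, card_filter, ← sum_add_distrib, Fintype.card_eq_sum_ones]
  refine sum_congr rfl fun p _ => ?_
  generalize σ p.1 = a, σ (edgeEnd p) = b
  revert a b; decide

lemma H_sub_H_const_one (C : Couplings) (h22 : C.J22 = C.J33) (h12 : C.J12 = C.J13)
    (σ : Config K L) :
    H K L C σ - H K L C (const K L 1) = (C.γ12 + C.γ1 / 2) * #(edgeBoundary (spinSet σ 0))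
      - 2 * C.γ1 * nVtx K L σ 0 + C.γ23 * nEdge K L σ 1 2 := by
  have hsum : ((nEdge K L σ 0 0 + nEdge K L σ 1 1 + nEdge K L σ 2 2 + nEdge K L σ 0 1
      + nEdge K L σ 0 2 + nEdge K L σ 1 2 : ℕ) : ℝ) = Fintype.card (Vtx K L × Bool) := by
    rw [sum_nEdge]
  have hdeg : ((#(edgeBoundary (spinSet σ 0)) + 2 * nEdge K L σ 0 0 : ℕ) : ℝ)
      = 4 * nVtx K L σ 0 := by
    rw [nEdge_zero_zero, card_edgeBoundary_add_two_mul, card_spinSet]; push_cast; ring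
  have hbd : ((nEdge K L σ 0 1 + nEdge K L σ 0 2 : ℕ) : ℝ) = #(edgeBoundary (spinSet σ 0)) := by
    rw [nEdge_zero_one_add_nEdge_zero_two]
  have hconst : H K L C (const K L 1) = -(C.J22 * Fintype.card (Vtx K L × Bool)) := by
    simp [H, nEdge, const]
  push_cast at hsum hdeg hbd
  rw [hconst]
  simp only [H, Couplings.γ1, Couplings.γ12, Couplings.γ23]
  linear_combination -C.J22 * hsum + (C.J12 + C.J22) * hbd - (C.J11 - C.J22) / 2 * hdeg
    + nEdge K L σ 2 2 * h22 - nEdge K L σ 0 2 * h12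

end Energy

section Barrier

variable {K L : ℕ} [NeZero K] [NeZero L] {C : Couplings}

lemma one_le_lstar (hγ1 : 0 < C.γ1) (hγ12 : 0 < C.γ12) : 1 ≤ lstar C :=
  Nat.one_le_iff_ne_zero.mpr (Nat.ceil_pos.mpr (by positivity)).ne'

lemma Γstar_eq (hγ1 : 0 < C.γ1) (hγ12 : 0 < C.γ12) :
    Γstar C = 4 * (C.γ12 + C.γ1 / 2) * lstar C - 2 * C.γ1 * ((lstar C : ℝ) ^ 2 - lstar C + 1) := by
  have hceil : (lstar C : ℝ) = ⌈(C.γ12 + C.γ1 / 2) / C.γ1⌉ := by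
    rw [lstar, natCast_ceil_eq_intCast_ceil (by positivity)]
    congr 2
    field_simp
  rw [Γstar, fh, hceil]

/-- `Γ*` is the energy cost of a spin-`1` droplet of `ℓ*² - ℓ* + 1` vertices with the least
possible perimeter `4ℓ*` in the sea of spins `2`. -/
lemma H_const_one_add_Γstar_le (hadm : Admissible K L C) {σ : Config K L}
    (hn : nVtx K L σ 0 + lstar C = lstar C * lstar C + 1) :
    H K L C (const K L 1) + Γstar C ≤ H K L C σ := by
  have hγ1 : 0 < C.γ1 := sub_pos.mpr hadm.h1122
  have hγ12 : 0 < C.γ12 := add_pos hadm.pos12 hadm.pos22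
  have hγ23 : 0 < C.γ23 := add_pos hadm.pos23 hadm.pos22
  have hℓ := one_le_lstar hγ1 hγ12
  have hnK : nVtx K L σ 0 < K := by nlinarith [hadm.hK]
  have hP : 4 * lstar C ≤ #(edgeBoundary (spinSet σ 0)) :=
    four_mul_le_card_edgeBoundary (spinSet σ 0) hnK (hnK.trans_le hadm.hKL) (by
      rw [card_spinSet]; omega)
  have hnR : (nVtx K L σ 0 : ℝ) = (lstar C : ℝ) ^ 2 - lstar C + 1 := by
    have : ((nVtx K L σ 0 + lstar C : ℕ) : ℝ) = ((lstar C * lstar C + 1 : ℕ) : ℝ) := by rw [hn]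
    push_cast at this; linear_combination this
  have hPR : 4 * (lstar C : ℝ) ≤ #(edgeBoundary (spinSet σ 0)) := by exact_mod_cast hP
  have hΔ := H_sub_H_const_one C hadm.h2233 hadm.h1213 σ
  rw [hnR] at hΔ
  rw [Γstar_eq hγ1 hγ12]
  nlinarith [mul_le_mul_of_nonneg_left hPR (by positivity : 0 ≤ C.γ12 + C.γ1 / 2),
    mul_nonneg hγ23.le (Nat.cast_nonneg (nEdge K L σ 1 2))]

end Barrier

theorem communication_height_lower_bound_to_stable (K L : ℕ) [NeZero K] [NeZero L] (C : Couplings)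
    (hadm : Admissible K L C) :
    Gamma K L C (const K L 1) (const K L 0) = Gamma K L C (const K L 2) (const K L 0) ∧
    Γstar C ≤ Gamma K L C (const K L 1) (const K L 0) := by
  have hswap : Equiv.swap 1 2 ∘ const K L 1 = const K L 2 :=
    funext fun _ => Equiv.swap_apply_left 1 2
  have hfix : Equiv.swap 1 2 ∘ const K L 0 = const K L 0 :=
    funext fun _ => Equiv.swap_apply_of_ne_of_ne (by decide : (0 : Spin) ≠ 1)
      (by decide : (0 : Spin) ≠ 2)
  refine ⟨?_, ?_⟩
  · rw [← hswap, ← hfix, Gamma_comp (H_swap_comp C hadm.h2233 hadm.h1213), hfix]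
  rw [Gamma, le_sub_iff_add_le']
  have hne : (1 : Spin) ≠ 0 := by decide
  refine le_Phi_of_forall_path (exists_path_of_forall_ne _ _ fun _ => hne) fun ω hω => ?_
  have hℓ := one_le_lstar (C := C) (sub_pos.mpr hadm.h1122) (add_pos hadm.pos12 hadm.pos22)
  have hℓℓ := Nat.le_mul_self (lstar C)
  have hK : lstar C * lstar C ≤ K * L := by
    nlinarith [hadm.hK, Nat.le_mul_of_pos_right K (Nat.pos_of_ne_zero (NeZero.ne L))]
  obtain ⟨k, hk, hn⟩ := ω.exists_nVtx_eq 0 (t := lstar C * lstar C - lstar C + 1)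
    (by simp [hω.1, nVtx_const]) (by rw [hω.2, nVtx_const, if_pos rfl]; omega)
  exact ⟨k, hk, H_const_one_add_Γstar_le hadm (by omega)⟩

end GenPotts
end

section
/- If σ belongs to M ∪ M̄ (σ is a strict local minimum of H or lies in a stable plateau), then every 1-cluster of σ is a rectangle. -/
/-!
If a site whose spin is not `1` has two distinct neighbours of spin `1`, changing its spin to
`1` strictly lowers the energy: the two bonds to those neighbours drop by `J₁₁ + J₁₂` each, the
other two rise by at most `J₁₂ + J₂₂` each, and `J₂₂ < J₁₁`. So at a strict local minimum or on a
stable plateau the set of `1`-spins, and hence every `1`-cluster, contains each site having two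
distinct neighbours in it. A connected set with this property is a rectangle: a maximal
rectangle inside it can be extended along any edge leaving it, since the column (or row) beyond
that edge fills up site by site next to the old one.
-/

lemma Nat.forall_lt_of_iff_succ {P : ℕ → Prop} {b j₀ : ℕ} (hj₀ : j₀ < b) (h : P j₀)
    (hstep : ∀ j, j + 1 < b → (P j ↔ P (j + 1))) : ∀ j < b, P j := by
  have hP0 : ∀ j < b, (P j ↔ P 0) := by
    intro j
    induction j with
    | zero => simp
    | succ j ih => exact fun hj => (hstep j hj).symm.trans (ih (by omega))
  exact fun j hj => (hP0 j hj).2 ((hP0 j₀ hj₀).1 h)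

lemma Relation.ReflTransGen.exists_mem_notMem {α : Type*} {r : α → α → Prop} {s : Set α}
    {a b : α} (h : Relation.ReflTransGen r a b) (ha : a ∈ s) (hb : b ∉ s) :
    ∃ u v, u ∈ s ∧ v ∉ s ∧ r u v := by
  induction h with
  | refl => exact absurd ha hb
  | @tail c d _ hcd ih =>
    by_cases hc : c ∈ s
    · exact ⟨c, d, hc, hb, hcd⟩
    · exact ih hc

lemma Fintype.sum_update_comp_add_sub_sum {G S M : Type*} [AddGroup G] [Fintype G]
    [DecidableEq G] [AddCommGroup M] (E : S → S → M) (σ : G → S) {v d : G} (hd : d ≠ 0) (s : S) :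
    ∑ x, E (Function.update σ v s x) (Function.update σ v s (x + d)) - ∑ x, E (σ x) (σ (x + d)) =
      (E s (σ (v + d)) - E (σ v) (σ (v + d))) + (E (σ (v - d)) s - E (σ (v - d)) (σ v)) := by
  have hvd : v + d ≠ v := by simpa using hd
  have hvd' : v - d ≠ v := by simpa using hd
  rw [← Finset.sum_sub_distrib, Fintype.sum_eq_add v (v - d) hvd'.symm]
  · simp [Function.update_of_ne hvd, Function.update_of_ne hvd']
  · rintro x ⟨hxv, hxvd⟩
    have hxd : x + d ≠ v := fun h => hxvd (eq_sub_of_add_eq h)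
    simp [Function.update_of_ne hxv, Function.update_of_ne hxd]

namespace ZMod

variable {n : ℕ}

def arc (x₀ : ZMod n) (a : ℕ) : Set (ZMod n) :=
  {x | ∃ i : ℕ, i < a ∧ x = x₀ + i}

def CycAdj (x x' : ZMod n) : Prop :=
  x' = x + 1 ∨ x' = x - 1

lemma CycAdj.symm {x x' : ZMod n} (h : CycAdj x x') : CycAdj x' x := by
  rcases h with rfl | rfl
  · exact Or.inr (add_sub_cancel_right x 1).symm
  · exact Or.inl (sub_add_cancel x 1).symm

lemma arc_one (x₀ : ZMod n) : arc x₀ 1 = {x₀} := by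
  ext x
  simp [arc]

lemma arc_succ (x₀ : ZMod n) (a : ℕ) : arc x₀ (a + 1) = insert (x₀ + a) (arc x₀ a) := by
  ext x
  simp only [arc, Set.mem_ofPred_eq, Set.mem_insert_iff, Nat.lt_succ_iff_lt_or_eq]
  constructor
  · rintro ⟨i, hi | rfl, rfl⟩
    exacts [Or.inr ⟨i, hi, rfl⟩, Or.inl rfl]
  · rintro (rfl | ⟨i, hi, rfl⟩)
    exacts [⟨a, Or.inr rfl, rfl⟩, ⟨i, Or.inl hi, rfl⟩]

lemma arc_sub_one_succ (x₀ : ZMod n) (a : ℕ) :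
    arc (x₀ - 1) (a + 1) = insert (x₀ - 1) (arc x₀ a) := by
  ext x
  simp only [arc, Set.mem_ofPred_eq, Set.mem_insert_iff]
  constructor
  · rintro ⟨_ | i, hi, rfl⟩
    · simp
    · exact Or.inr ⟨i, by omega, by push_cast; ring⟩
  · rintro (rfl | ⟨i, hi, rfl⟩)
    · exact ⟨0, by omega, by simp⟩
    · exact ⟨i + 1, by omega, by push_cast; ring⟩

lemma arc_eq_univ [NeZero n] (x₀ : ZMod n) {a : ℕ} (ha : n ≤ a) : arc x₀ a = Set.univ :=
  Set.eq_univ_of_forall fun x =>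
    ⟨(x - x₀).val, (ZMod.val_lt _).trans_le ha, by rw [ZMod.natCast_zmod_val]; ring⟩

lemma lt_of_notMem_arc [NeZero n] {x₀ x : ZMod n} {a : ℕ} (hx : x ∉ arc x₀ a) : a < n := by
  by_contra! ha
  exact hx (arc_eq_univ x₀ ha ▸ Set.mem_univ x)

lemma exists_arc_eq_insert {x₀ x x' : ZMod n} {a : ℕ} (hx : x ∈ arc x₀ a)
    (hx' : x' ∉ arc x₀ a) (hadj : CycAdj x x') :
    ∃ x₁, arc x₁ (a + 1) = insert x' (arc x₀ a) := by
  obtain ⟨i, hi, rfl⟩ := hx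
  rcases hadj with rfl | rfl
  · have hia : i + 1 = a := by
      by_contra hne
      exact hx' ⟨i + 1, by omega, by push_cast; ring⟩
    exact ⟨x₀, by rw [arc_succ, ← hia]; push_cast; ring_nf⟩
  · obtain rfl : i = 0 := by
      by_contra hne
      exact hx' ⟨i - 1, by omega, by rw [Nat.cast_sub (by omega)]; ring⟩
    exact ⟨x₀ - 1, by rw [arc_sub_one_succ]; simp⟩

end ZMod

namespace GenPotts

open ZMod

section Geometry

variable {K L : ℕ}

lemma rectSet_eq_prod (x₀ : ZMod K) (y₀ : ZMod L) (a b : ℕ) :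
    rectSet K L x₀ y₀ a b = arc x₀ a ×ˢ arc y₀ b := by
  ext ⟨x, y⟩
  constructor
  · rintro ⟨i, j, hi, hj, h⟩
    obtain ⟨rfl, rfl⟩ := Prod.ext_iff.1 h
    exact ⟨⟨i, hi, rfl⟩, j, hj, rfl⟩
  · rintro ⟨⟨i, hi, rfl⟩, j, hj, rfl⟩
    exact ⟨i, j, hi, hj, rfl⟩

lemma adj_iff {v w : Vtx K L} :
    Adj K L v w ↔ (w.2 = v.2 ∧ CycAdj v.1 w.1) ∨ (w.1 = v.1 ∧ CycAdj v.2 w.2) := by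
  obtain ⟨x, y⟩ := v
  obtain ⟨x', y'⟩ := w
  simp only [Adj, CycAdj, Prod.ext_iff]
  tauto

lemma Adj.symm {v w : Vtx K L} (h : Adj K L v w) : Adj K L w v := by
  rw [adj_iff] at h ⊢
  rcases h with ⟨h, h'⟩ | ⟨h, h'⟩
  exacts [Or.inl ⟨h.symm, h'.symm⟩, Or.inr ⟨h.symm, h'.symm⟩]

lemma adj_swap {v w : Vtx K L} : Adj L K v.swap w.swap ↔ Adj K L v w := by
  simp only [adj_iff, Prod.fst_swap, Prod.snd_swap]
  exact Or.comm

def TwoNeighbourClosed (A : Set (Vtx K L)) : Prop :=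
  ∀ ⦃v w₁ w₂⦄, w₁ ∈ A → w₂ ∈ A → Adj K L v w₁ → Adj K L v w₂ → w₁ ≠ w₂ → v ∈ A

lemma TwoNeighbourClosed.preimage_swap {A : Set (Vtx K L)} (hA : TwoNeighbourClosed A) :
    TwoNeighbourClosed (Prod.swap ⁻¹' A : Set (Vtx L K)) :=
  fun _ _ _ h₁ h₂ hadj₁ hadj₂ hne =>
    hA h₁ h₂ (adj_swap.1 hadj₁) (adj_swap.1 hadj₂) (Prod.swap_injective.ne hne)

lemma TwoNeighbourClosed.singleton_prod_subset {A : Set (Vtx K L)}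
    (hA : TwoNeighbourClosed A) {x x' : ZMod K} {y₀ y : ZMod L} {b : ℕ}
    (hcol : {x} ×ˢ arc y₀ b ⊆ A) (hxx' : x ≠ x') (hadj : CycAdj x x') (hy : y ∈ arc y₀ b)
    (hy' : (x', y) ∈ A) : {x'} ×ˢ arc y₀ b ⊆ A := by
  have hcol' : ∀ j < b, (x, y₀ + j) ∈ A := fun j hj => hcol ⟨rfl, j, hj, rfl⟩
  have hside : ∀ y : ZMod L, Adj K L (x', y) (x, y) := fun y =>
    adj_iff.2 (Or.inl ⟨rfl, hadj.symm⟩)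
  have hup : ∀ y : ZMod L, Adj K L (x', y) (x', y + 1) := fun y =>
    adj_iff.2 (Or.inr ⟨rfl, Or.inl rfl⟩)
  have hdown : ∀ y : ZMod L, Adj K L (x', y + 1) (x', y) := fun y => (hup y).symm
  have hne : ∀ y y' : ZMod L, ((x', y) : Vtx K L) ≠ (x, y') := fun _ _ h =>
    hxx' (congrArg Prod.fst h).symm
  obtain ⟨j₀, hj₀, rfl⟩ := hy
  have hstep : ∀ j, j + 1 < b → ((x', y₀ + j) ∈ A ↔ (x', y₀ + (j + 1 : ℕ)) ∈ A) := by
    intro j hj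
    have hnext := hcol' (j + 1) hj
    rw [Nat.cast_succ, ← add_assoc] at hnext ⊢
    exact ⟨fun h => hA h hnext (hdown _) (hside _) (hne _ _),
      fun h => hA h (hcol' j (by omega)) (hup _) (hside _) (hne _ _)⟩
  have hfill := Nat.forall_lt_of_iff_succ (P := fun j : ℕ => (x', y₀ + j) ∈ A) hj₀ hy' hstep
  rintro ⟨_, _⟩ ⟨rfl, j, hj, rfl⟩
  exact hfill j hj

lemma TwoNeighbourClosed.exists_arc_succ_prod_subset {A : Set (Vtx K L)}
    (hA : TwoNeighbourClosed A) {x₀ x x' : ZMod K} {y₀ y : ZMod L} {a b : ℕ}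
    (hR : arc x₀ a ×ˢ arc y₀ b ⊆ A) (hx : x ∈ arc x₀ a) (hy : y ∈ arc y₀ b)
    (hx' : x' ∉ arc x₀ a) (hadj : CycAdj x x') (hy' : (x', y) ∈ A) :
    ∃ x₁, arc x₁ (a + 1) ×ˢ arc y₀ b ⊆ A := by
  obtain ⟨x₁, hx₁⟩ := exists_arc_eq_insert hx hx' hadj
  have hcol : {x} ×ˢ arc y₀ b ⊆ A :=
    (Set.prod_mono (Set.singleton_subset_iff.2 hx) le_rfl).trans hR
  have hcol' := hA.singleton_prod_subset hcol (ne_of_mem_of_not_mem hx hx') hadj hy hy'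
  refine ⟨x₁, ?_⟩
  rw [hx₁, Set.insert_eq, Set.union_prod]
  exact Set.union_subset hcol' hR

lemma TwoNeighbourClosed.exists_larger_prod_subset [NeZero K] [NeZero L] {A : Set (Vtx K L)}
    (hA : TwoNeighbourClosed A)
    (hconn : ∀ v ∈ A, ∀ w ∈ A,
      Relation.ReflTransGen (fun a b => a ∈ A ∧ b ∈ A ∧ Adj K L a b) v w)
    {x₀ : ZMod K} {y₀ : ZMod L} {a b : ℕ} (ha : 0 < a) (hb : 0 < b)
    (hR : arc x₀ a ×ˢ arc y₀ b ⊆ A) (hRA : arc x₀ a ×ˢ arc y₀ b ≠ A) :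
    (a < K ∧ ∃ x₁, arc x₁ (a + 1) ×ˢ arc y₀ b ⊆ A) ∨
      (b < L ∧ ∃ y₁, arc x₀ a ×ˢ arc y₁ (b + 1) ⊆ A) := by
  obtain ⟨z, hzA, hzR⟩ := Set.exists_of_ssubset (hR.ssubset_of_ne hRA)
  have hcorner : (x₀, y₀) ∈ arc x₀ a ×ˢ arc y₀ b := ⟨⟨0, ha, by simp⟩, 0, hb, by simp⟩
  obtain ⟨⟨x, y⟩, ⟨x', y'⟩, ⟨hx, hy⟩, hw, -, hw', hadj⟩ :=
    (hconn _ (hR hcorner) z hzA).exists_mem_notMem hcorner hzR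
  rcases adj_iff.1 hadj with ⟨rfl, hadj⟩ | ⟨rfl, hadj⟩
  · have hx' : x' ∉ arc x₀ a := fun hx' => hw ⟨hx', hy⟩
    exact Or.inl ⟨lt_of_notMem_arc hx', hA.exists_arc_succ_prod_subset hR hx hy hx' hadj hw'⟩
  · have hy' : y' ∉ arc y₀ b := fun hy' => hw ⟨hx, hy'⟩
    have hswap {s : Set (ZMod L)} {t : Set (ZMod K)} :
        s ×ˢ t ⊆ Prod.swap ⁻¹' A ↔ t ×ˢ s ⊆ A := by
      rw [← Set.image_subset_iff, Set.image_swap_prod]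
    obtain ⟨y₁, hy₁⟩ := hA.preimage_swap.exists_arc_succ_prod_subset (hswap.2 hR) hy hx hy'
      hadj hw'
    exact Or.inr ⟨lt_of_notMem_arc hy', y₁, hswap.1 hy₁⟩

theorem TwoNeighbourClosed.isRectangle [NeZero K] [NeZero L] {A : Set (Vtx K L)}
    (hA : TwoNeighbourClosed A) (hne : A.Nonempty)
    (hconn : ∀ v ∈ A, ∀ w ∈ A,
      Relation.ReflTransGen (fun a b => a ∈ A ∧ b ∈ A ∧ Adj K L a b) v w) :
    IsRectangle K L A := by
  by_contra hrect
  have hgrow : ∀ m : ℕ, ∃ (x₀ : ZMod K) (y₀ : ZMod L) (a b : ℕ), 0 < a ∧ 0 < b ∧ a ≤ K ∧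
      b ≤ L ∧ m ≤ a + b ∧ arc x₀ a ×ˢ arc y₀ b ⊆ A := by
    intro m
    induction m with
    | zero =>
      obtain ⟨⟨x, y⟩, hv⟩ := hne
      refine ⟨x, y, 1, 1, one_pos, one_pos, NeZero.one_le, NeZero.one_le, by omega, ?_⟩
      rwa [arc_one, arc_one, Set.singleton_prod_singleton, Set.singleton_subset_iff]
    | succ m ih =>
      obtain ⟨x₀, y₀, a, b, ha, hb, haK, hbL, hm, hR⟩ := ih
      have hRA : arc x₀ a ×ˢ arc y₀ b ≠ A := fun h =>
        hrect ⟨x₀, y₀, a, b, haK, hbL, by rw [rectSet_eq_prod, h]⟩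
      rcases hA.exists_larger_prod_subset hconn ha hb hR hRA with ⟨haK, x₁, h⟩ | ⟨hbL, y₁, h⟩
      · exact ⟨x₁, y₀, a + 1, b, by omega, hb, haK, hbL, by omega, h⟩
      · exact ⟨x₀, y₁, a, b + 1, ha, by omega, haK, hbL, by omega, h⟩
  obtain ⟨-, -, a, b, -, -, haK, hbL, hm, -⟩ := hgrow (K + L + 1)
  omega

end Geometry

lemma singleFlip_update {K L : ℕ} {σ : Config K L} {v : Vtx K L} {s : Spin} (h : σ v ≠ s) :
    SingleFlip K L σ (Function.update σ v s) :=
  ⟨v, by simpa using h, fun _ hw => (Function.update_of_ne hw s σ).symm⟩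

section Energy

variable {K L : ℕ} [NeZero K] [NeZero L]

def bondEnergy (C : Couplings) (s t : Spin) : ℝ :=
  !![-C.J11, C.J12, C.J13; C.J12, -C.J22, C.J23; C.J13, C.J23, -C.J33] s t

lemma bondEnergy_comm (C : Couplings) (s t : Spin) : bondEnergy C s t = bondEnergy C t s := by
  fin_cases s <;> fin_cases t <;> rfl

lemma H_eq_sum_bondEnergy (C : Couplings) (σ : Config K L) :
    H K L C σ = ∑ x, bondEnergy C (σ x) (σ (x + (1, 0))) +
      ∑ x, bondEnergy C (σ x) (σ (x + (0, 1))) := by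
  classical
  set e : Vtx K L × Bool → Vtx K L := fun p =>
    if p.2 then (p.1.1 + 1, p.1.2) else (p.1.1, p.1.2 + 1) with he
  have hind : ∀ a b : Spin, bondEnergy C a b =
      -(C.J11 * (if (a = 0 ∧ b = 0) ∨ (a = 0 ∧ b = 0) then 1 else 0)
        + C.J22 * (if (a = 1 ∧ b = 1) ∨ (a = 1 ∧ b = 1) then 1 else 0)
        + C.J33 * (if (a = 2 ∧ b = 2) ∨ (a = 2 ∧ b = 2) then 1 else 0))
      + C.J12 * (if (a = 0 ∧ b = 1) ∨ (a = 1 ∧ b = 0) then 1 else 0)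
      + C.J13 * (if (a = 0 ∧ b = 2) ∨ (a = 2 ∧ b = 0) then 1 else 0)
      + C.J23 * (if (a = 1 ∧ b = 2) ∨ (a = 2 ∧ b = 1) then 1 else 0) := by
    intro a b
    fin_cases a <;> fin_cases b <;> simp [bondEnergy]
  have hsum : ∑ x, bondEnergy C (σ x) (σ (x + (1, 0))) +
      ∑ x, bondEnergy C (σ x) (σ (x + (0, 1))) = ∑ p, bondEnergy C (σ p.1) (σ (e p)) := by
    simp [Fintype.sum_prod_type, Finset.sum_add_distrib, he]
  rw [hsum, H]
  simp only [nEdge, Finset.natCast_card_filter, hind, Finset.sum_add_distrib,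
    Finset.sum_neg_distrib, ← Finset.mul_sum]
  rfl

lemma H_update_sub [Fact (1 < K)] [Fact (1 < L)] (C : Couplings) (σ : Config K L)
    (v : Vtx K L) (s : Spin) :
    H K L C (Function.update σ v s) - H K L C σ =
      (bondEnergy C s (σ (v.1 + 1, v.2)) - bondEnergy C (σ v) (σ (v.1 + 1, v.2))) +
      (bondEnergy C s (σ (v.1 - 1, v.2)) - bondEnergy C (σ v) (σ (v.1 - 1, v.2))) +
      (bondEnergy C s (σ (v.1, v.2 + 1)) - bondEnergy C (σ v) (σ (v.1, v.2 + 1))) +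
      (bondEnergy C s (σ (v.1, v.2 - 1)) - bondEnergy C (σ v) (σ (v.1, v.2 - 1))) := by
  have h₁ : ((1, 0) : Vtx K L) ≠ 0 := by simp [Prod.ext_iff]
  have h₂ : ((0, 1) : Vtx K L) ≠ 0 := by simp [Prod.ext_iff]
  rw [H_eq_sum_bondEnergy, H_eq_sum_bondEnergy, add_sub_add_comm,
    Fintype.sum_update_comp_add_sub_sum _ _ h₁, Fintype.sum_update_comp_add_sub_sum _ _ h₂]
  obtain ⟨x, y⟩ := v
  simp only [Prod.mk_add_mk, Prod.mk_sub_mk, add_zero, sub_zero]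
  rw [bondEnergy_comm C _ s, bondEnergy_comm C (σ (x - 1, y)), bondEnergy_comm C _ s,
    bondEnergy_comm C (σ (x, y - 1))]
  ring

section Couplings

variable {C : Couplings}

lemma bondEnergy_zero_sub_le (pos12 : 0 < C.J12) (pos22 : 0 < C.J22) (pos23 : 0 < C.J23)
    (h1122 : C.J22 < C.J11) (h2233 : C.J22 = C.J33) (h1213 : C.J12 = C.J13) {s : Spin}
    (hs : s ≠ 0) (t : Spin) :
    bondEnergy C 0 t - bondEnergy C s t ≤ C.J12 + C.J22 := by
  fin_cases s
  · exact absurd rfl hs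
  all_goals fin_cases t <;> simp [bondEnergy] <;> linarith

lemma bondEnergy_zero_sub_zero (h1213 : C.J12 = C.J13) {s : Spin} (hs : s ≠ 0) :
    bondEnergy C 0 0 - bondEnergy C s 0 = -(C.J11 + C.J12) := by
  fin_cases s
  · exact absurd rfl hs
  all_goals simp [bondEnergy, h1213]; ring

lemma H_update_zero_lt [Fact (1 < K)] [Fact (1 < L)] (pos12 : 0 < C.J12)
    (pos22 : 0 < C.J22) (pos23 : 0 < C.J23) (h1122 : C.J22 < C.J11) (h2233 : C.J22 = C.J33)
    (h1213 : C.J12 = C.J13) {σ : Config K L} {v w₁ w₂ : Vtx K L} (hv : σ v ≠ 0)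
    (h₁ : Adj K L v w₁) (h₂ : Adj K L v w₂) (hne : w₁ ≠ w₂) (hw₁ : σ w₁ = 0)
    (hw₂ : σ w₂ = 0) : H K L C (Function.update σ v 0) < H K L C σ := by
  have hle := bondEnergy_zero_sub_le pos12 pos22 pos23 h1122 h2233 h1213 hv
  have hzero := bondEnergy_zero_sub_zero h1213 hv
  rw [← sub_neg, H_update_sub]
  rcases h₁ with rfl | rfl | rfl | rfl <;> rcases h₂ with rfl | rfl | rfl | rfl <;>
    first
    | exact absurd rfl hne
    | rw [hw₁, hw₂, hzero]
      linarith [hle (σ (v.1 + 1, v.2)), hle (σ (v.1 - 1, v.2)), hle (σ (v.1, v.2 + 1)),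
        hle (σ (v.1, v.2 - 1))]

end Couplings

lemma H_le_of_singleFlip {C : Couplings} {σ σ' : Config K L}
    (hσ : σ ∈ Mset K L C ∪ Mbar K L C) (h : SingleFlip K L σ σ') : H K L C σ ≤ H K L C σ' := by
  rcases hσ with hM | ⟨D, ⟨-, ⟨c, hc⟩, -, hD⟩, hσD⟩
  · exact (hM σ' h).le
  · by_cases hσ' : σ' ∈ D
    · exact ((hc σ hσD).trans (hc σ' hσ').symm).le
    · exact (hD σ hσD σ' h hσ').le

lemma twoNeighbourClosed_spin_zero [Fact (1 < K)] [Fact (1 < L)] {C : Couplings}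
    (pos12 : 0 < C.J12) (pos22 : 0 < C.J22) (pos23 : 0 < C.J23) (h1122 : C.J22 < C.J11)
    (h2233 : C.J22 = C.J33) (h1213 : C.J12 = C.J13) {σ : Config K L}
    (hσ : σ ∈ Mset K L C ∪ Mbar K L C) : TwoNeighbourClosed {v : Vtx K L | σ v = 0} := by
  intro v w₁ w₂ hw₁ hw₂ h₁ h₂ hne
  by_contra hv
  exact (H_le_of_singleFlip hσ (singleFlip_update hv)).not_gt
    (H_update_zero_lt pos12 pos22 pos23 h1122 h2233 h1213 hv h₁ h₂ hne hw₁ hw₂)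

end Energy

lemma IsCluster.twoNeighbourClosed {K L : ℕ} {σ : Config K L} {r : Spin} {A : Set (Vtx K L)}
    (hA : IsCluster K L σ r A) (hr : TwoNeighbourClosed {v : Vtx K L | σ v = r}) :
    TwoNeighbourClosed A :=
  fun _ _ _ hw₁ hw₂ h₁ h₂ hne =>
    hA.2.2.2 _ hw₁ _ h₁.symm (hr (hA.2.1 _ hw₁) (hA.2.1 _ hw₂) h₁ h₂ hne)

theorem one_clusters_of_local_minima_are_rectangles_general
    (K L : ℕ) [NeZero K] [NeZero L] (C : Couplings)
    (hK : 3 ≤ K) (hKL : K ≤ L)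
    (pos22 : 0 < C.J22)
    (pos12 : 0 < C.J12) (pos23 : 0 < C.J23)
    (h1122 : C.J22 < C.J11) (h2233 : C.J22 = C.J33) (h1213 : C.J12 = C.J13)
    (σ : Config K L) (hσ : σ ∈ Mset K L C ∪ Mbar K L C)
    (A : Set (Vtx K L)) (hA : IsCluster K L σ 0 A) :
    IsRectangle K L A := by
  have : Fact (1 < K) := ⟨by omega⟩
  have : Fact (1 < L) := ⟨by omega⟩
  have hA₂ : TwoNeighbourClosed A :=
    hA.twoNeighbourClosed (twoNeighbourClosed_spin_zero pos12 pos22 pos23 h1122 h2233 h1213 hσ)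
  exact hA₂.isRectangle hA.1 hA.2.2.1

theorem one_clusters_of_local_minima_are_rectangles
    (K L : ℕ) [NeZero K] [NeZero L] (C : Couplings)
    (hK : 3 ≤ K) (hKL : K ≤ L)
    (pos11 : 0 < C.J11) (pos22 : 0 < C.J22) (pos33 : 0 < C.J33)
    (pos12 : 0 < C.J12) (pos13 : 0 < C.J13) (pos23 : 0 < C.J23)
    (h1122 : C.J22 < C.J11) (h2233 : C.J22 = C.J33) (h1213 : C.J12 = C.J13)
    (σ : Config K L) (hσ : σ ∈ Mset K L C ∪ Mbar K L C)
    (A : Set (Vtx K L)) (hA : IsCluster K L σ 0 A) :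
    IsRectangle K L A :=
  one_clusters_of_local_minima_are_rectangles_general K L C hK hKL pos22 pos12 pos23 h1122 h2233
    h1213 σ hσ A hA

end GenPotts
end
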